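/- arXiv:math/0512230 — 2 statements merged into one kernel-verified Lean document; each statement's English description precedes it below -/
import Mathlib

section
/- With β_a the Busemann function of a Gromov boundary point a in a δ-hyperbolic geodesic space, for all x, y one has |β_a(x,y) + β_a(y,x)| ≤ 120δ, and for all x, y, z one has |β_a(x,y) + β_a(y,z) − β_a(x,z)| ≤ 200δ. -/
open scoped NNReal

/-- δ-hyperbolicity via the Gromov four-point condition. -/
def IsDeltaHyperbolic (X : Type*) [MetricSpace X] (δ : ℝ) : Prop :=
  ∀ x y z w : X,
    dist x y + dist z w ≤ max (dist x z + dist y w) (dist x w + dist y z) + 2 * δ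

/-- A geodesic metric space. -/
def IsGeodesicSpace (X : Type*) [MetricSpace X] : Prop :=
  ∀ x y : X, ∃ f : ℝ → X, f 0 = x ∧ f (dist x y) = y ∧
    ∀ s t : ℝ, s ∈ Set.Icc 0 (dist x y) → t ∈ Set.Icc 0 (dist x y) →
      dist (f s) (f t) = |s - t|

/-- A geodesic ray, parametrized by `ℝ≥0`. -/
def IsGeodesicRay {X : Type*} [MetricSpace X] (g : ℝ≥0 → X) : Prop :=
  ∀ s t : ℝ≥0, dist (g s) (g t) = |(s : ℝ) - (t : ℝ)|

/-- `β_a(x, h) = limsup_{t→∞} (d(x, h(t)) - t)` for a geodesic ray `h`. -/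
noncomputable def busemannRay {X : Type*} [MetricSpace X] (x : X) (h : ℝ≥0 → X) : ℝ :=
  Filter.limsup (fun t : ℝ≥0 => dist x (h t) - (t : ℝ)) Filter.atTop

/-- `h` is a geodesic ray from `y` to the boundary point determined by the
reference geodesic ray `a` (finite Hausdorff distance between the images). -/
def RayTo {X : Type*} [MetricSpace X] (y : X) (a : ℝ≥0 → X) (h : ℝ≥0 → X) : Prop :=
  IsGeodesicRay h ∧ h 0 = y ∧
    EMetric.hausdorffEdist (Set.range h) (Set.range a) ≠ ⊤

/-- The Busemann function `β_a(x, y) = sup_{h ∈ L(y,a)} limsup_{t→∞}(d(x,h(t)) − t)`. -/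
noncomputable def busemann {X : Type*} [MetricSpace X] (a : ℝ≥0 → X) (x y : X) : ℝ :=
  sSup (busemannRay x '' {h : ℝ≥0 → X | RayTo y a h})

/-!
For a geodesic ray `g`, `busemannRay x g - busemannRay y g` lies between the liminf and the
limsup of `d(x, g t) - d(y, g t) = d(x, y) - 2 (x | g t)_y`. Two geodesic rays `h`, `k` at finite
Hausdorff distance satisfy `(h s | k t)_y ≥ min s t - C`, so by the four-point condition
`(x | h t)_y` and `(x | k s)_y` agree up to `δ` once `s` and `t` are large; hence those
liminfs and limsups along `h` and along `k` agree up to `2δ`. Taking `y` to be the origin of `h`,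
where `busemannRay y h = 0`, gives the cocycle identity up to `2δ` for single rays. Any two rays
from `y` to `a` then give Busemann values within `2δ` of each other, so passing to the supremum
costs `2δ` per term. Antisymmetry is the cocycle identity at `(x, y, x)` together with
`0 ≤ β_a(x, x) ≤ 2δ`.
-/

open Filter Set Metric

section GromovProduct

variable {X : Type*} [MetricSpace X]

noncomputable def gromovProduct (p u v : X) : ℝ := (dist p u + dist p v - dist u v) / 2

lemma gromovProduct_le_dist_left (p u v : X) : gromovProduct p u v ≤ dist p u := by
  unfold gromovProduct
  linarith [dist_triangle p u v]

lemma dist_sub_dist_le_gromovProduct (p u v : X) : dist p u - dist u v ≤ gromovProduct p u v := by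
  unfold gromovProduct
  linarith [dist_triangle p v u, dist_comm u v]

lemma gromovProduct_sub_dist_le (p q u v : X) :
    gromovProduct q u v - dist p q ≤ gromovProduct p u v := by
  unfold gromovProduct
  linarith [dist_triangle q p u, dist_triangle q p v, dist_comm p q]

lemma dist_sub_dist_eq_sub_two_mul_gromovProduct (x y w : X) :
    dist x w - dist y w = dist x y - 2 * gromovProduct y x w := by
  unfold gromovProduct
  rw [dist_comm y x]
  ring

lemma isBoundedUnder_dist_sub_dist {ι : Type*} {l : Filter ι} (x y : X) (w : ι → X) :
    IsBoundedUnder (· ≤ ·) l (fun i => dist x (w i) - dist y (w i)) ∧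
      IsBoundedUnder (· ≥ ·) l (fun i => dist x (w i) - dist y (w i)) :=
  isBoundedUnder_le_abs.mp (isBoundedUnder_of ⟨dist x y, fun i => abs_dist_sub_le x y (w i)⟩)

end GromovProduct

namespace IsDeltaHyperbolic

variable {X : Type*} [MetricSpace X] {δ : ℝ}

lemma nonneg (hX : IsDeltaHyperbolic X δ) (x : X) : 0 ≤ δ := by
  have := hX x x x x
  simp only [dist_self, add_zero, max_self] at this
  linarith

lemma min_sub_le_gromovProduct (hX : IsDeltaHyperbolic X δ) (p u v w : X) :
    min (gromovProduct p u w) (gromovProduct p w v) - δ ≤ gromovProduct p u v := by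
  have H := hX u v p w
  rw [dist_comm u p, dist_comm v p] at H
  unfold gromovProduct
  rcases max_cases (dist p u + dist v w) (dist u w + dist p v) with ⟨hmax, -⟩ | ⟨hmax, -⟩ <;>
    rw [hmax] at H
  · linarith [min_le_right ((dist p u + dist p w - dist u w) / 2)
      ((dist p w + dist p v - dist w v) / 2), dist_comm v w]
  · linarith [min_le_left ((dist p u + dist p w - dist u w) / 2)
      ((dist p w + dist p v - dist w v) / 2)]

end IsDeltaHyperbolic

namespace IsGeodesicRay

variable {X : Type*} [MetricSpace X] {g : ℝ≥0 → X}

lemma dist_zero (hg : IsGeodesicRay g) (t : ℝ≥0) : dist (g 0) (g t) = t := by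
  rw [hg, NNReal.coe_zero, zero_sub, abs_neg, NNReal.abs_eq]

lemma gromovProduct_zero (hg : IsGeodesicRay g) (s t : ℝ≥0) :
    gromovProduct (g 0) (g s) (g t) = min (s : ℝ) t := by
  rw [gromovProduct, hg.dist_zero, hg.dist_zero, hg s t]
  rcases le_total (s : ℝ) t with hst | hst
  · rw [abs_of_nonpos (sub_nonpos.mpr hst), min_eq_left hst]; ring
  · rw [abs_of_nonneg (sub_nonneg.mpr hst), min_eq_right hst]; ring

lemma abs_dist_sub_le (hg : IsGeodesicRay g) (y : X) (t : ℝ≥0) :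
    |dist y (g t) - t| ≤ dist y (g 0) := by
  simpa only [hg.dist_zero] using _root_.abs_dist_sub_le y (g 0) (g t)

lemma busemannRay_self (hg : IsGeodesicRay g) : busemannRay (g 0) g = 0 := by
  simp only [busemannRay, hg.dist_zero, sub_self, limsup_const]

lemma isBoundedUnder_dist_sub (hg : IsGeodesicRay g) (y : X) :
    IsBoundedUnder (· ≤ ·) atTop (fun t : ℝ≥0 => dist y (g t) - t) ∧
      IsBoundedUnder (· ≥ ·) atTop (fun t : ℝ≥0 => dist y (g t) - t) :=
  isBoundedUnder_le_abs.mp (isBoundedUnder_of ⟨dist y (g 0), hg.abs_dist_sub_le y⟩)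

lemma busemannRay_sub_mem (hg : IsGeodesicRay g) (x y : X) :
    busemannRay x g - busemannRay y g ∈
      Icc (liminf (fun t => dist x (g t) - dist y (g t)) atTop)
        (limsup (fun t => dist x (g t) - dist y (g t)) atTop) := by
  obtain ⟨hle, hge⟩ := hg.isBoundedUnder_dist_sub y
  obtain ⟨hle', hge'⟩ := isBoundedUnder_dist_sub_dist x y (g ·)
  have hsplit : (fun t : ℝ≥0 => dist x (g t) - t) =
      (fun t => dist y (g t) - t) + (fun t => dist x (g t) - dist y (g t)) := by
    ext t; simp only [Pi.add_apply]; ring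
  rw [mem_Icc, le_sub_iff_add_le', sub_le_iff_le_add', busemannRay, busemannRay, hsplit]
  exact ⟨le_limsup_add hle hge.isCoboundedUnder_le hle' hge',
    limsup_add_le hge hle hge'.isCoboundedUnder_le hle'⟩

end IsGeodesicRay

section Asymptotic

variable {X : Type*} [MetricSpace X]

lemma exists_dist_le_of_hausdorffEDist_ne_top {s t : Set X} (hst : hausdorffEDist s t ≠ ⊤) :
    ∃ K, ∀ x ∈ s, ∃ y ∈ t, dist x y ≤ K :=
  ⟨hausdorffDist s t + 1, fun _ hx =>
    let ⟨y, hy, hxy⟩ := exists_dist_lt_of_hausdorffDist_lt hx (lt_add_one _) hst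
    ⟨y, hy, hxy.le⟩⟩

lemma RayTo.hausdorffEDist_ne_top {a h k : ℝ≥0 → X} {y z : X} (hh : RayTo y a h)
    (hk : RayTo z a k) : hausdorffEDist (range h) (range k) ≠ ⊤ :=
  ne_top_of_le_ne_top
    (ENNReal.add_ne_top.mpr ⟨hh.2.2, by rw [hausdorffEDist_comm]; exact hk.2.2⟩)
    hausdorffEDist_triangle

variable {δ : ℝ} {h k : ℝ≥0 → X}

lemma IsDeltaHyperbolic.exists_min_sub_le_gromovProduct (hX : IsDeltaHyperbolic X δ)
    (hh : IsGeodesicRay h) (hk : IsGeodesicRay k)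
    (hhk : hausdorffEDist (range h) (range k) ≠ ⊤) (p : X) :
    ∃ C, ∀ s t : ℝ≥0, min (s : ℝ) t - C ≤ gromovProduct p (h s) (k t) := by
  obtain ⟨K, hK⟩ := exists_dist_le_of_hausdorffEDist_ne_top hhk
  refine ⟨dist p (h 0) + dist p (k 0) + dist (h 0) (k 0) + K + δ, fun s t => ?_⟩
  obtain ⟨_, ⟨σ, rfl⟩, hσ⟩ := hK (h s) (mem_range_self s)
  have hK0 : 0 ≤ K := dist_nonneg.trans hσ
  have hσs : (s : ℝ) - dist (h 0) (k 0) - K ≤ σ := by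
    rw [← hh.dist_zero, ← hk.dist_zero]
    linarith [dist_triangle4 (h 0) (k 0) (k σ) (h s), dist_comm (k σ) (h s)]
  have hsσ : (s : ℝ) - dist p (h 0) - K ≤ gromovProduct p (h s) (k σ) := by
    rw [← hh.dist_zero]
    linarith [dist_sub_dist_le_gromovProduct p (h s) (k σ), dist_triangle (h 0) p (h s),
      dist_comm (h 0) p]
  have hσt : min (σ : ℝ) t - dist p (k 0) ≤ gromovProduct p (k σ) (k t) := by
    simpa only [hk.gromovProduct_zero] using gromovProduct_sub_dist_le p (k 0) (k σ) (k t)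
  have hmin : min (s : ℝ) t - dist (h 0) (k 0) - K ≤ min (σ : ℝ) t :=
    le_min (by linarith [min_le_left (s : ℝ) t])
      (by linarith [min_le_right (s : ℝ) t, dist_nonneg (x := h 0) (y := k 0)])
  have hprod : min (s : ℝ) t - (dist p (h 0) + dist p (k 0) + dist (h 0) (k 0) + K) ≤
      min (gromovProduct p (h s) (k σ)) (gromovProduct p (k σ) (k t)) :=
    le_min (by linarith [min_le_left (s : ℝ) t, dist_nonneg (x := p) (y := k 0),
        dist_nonneg (x := h 0) (y := k 0)])
      (by linarith [dist_nonneg (x := p) (y := h 0)])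
  linarith [hX.min_sub_le_gromovProduct p (h s) (k t) (k σ)]

lemma IsDeltaHyperbolic.eventually_dist_sub_dist_le (hX : IsDeltaHyperbolic X δ)
    (hh : IsGeodesicRay h) (hk : IsGeodesicRay k)
    (hkh : hausdorffEDist (range k) (range h) ≠ ⊤) (x y : X) :
    ∀ᶠ s in atTop, ∀ᶠ t in atTop,
      dist x (h t) - dist y (h t) ≤ dist x (k s) - dist y (k s) + 2 * δ := by
  obtain ⟨C, hC⟩ := hX.exists_min_sub_le_gromovProduct hk hh hkh y
  have hlarge : ∀ᶠ s : ℝ≥0 in atTop, C + dist y x ≤ s :=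
    (NNReal.tendsto_coe_atTop.2 tendsto_id).eventually_ge_atTop _
  filter_upwards [hlarge] with s hs
  filter_upwards [hlarge] with t ht
  have hfar : gromovProduct y x (k s) ≤ gromovProduct y (k s) (h t) :=
    (gromovProduct_le_dist_left y x (k s)).trans (by linarith [hC s t, le_min hs ht])
  have hfour := hX.min_sub_le_gromovProduct y x (h t) (k s)
  rw [min_eq_left hfar] at hfour
  rw [dist_sub_dist_eq_sub_two_mul_gromovProduct, dist_sub_dist_eq_sub_two_mul_gromovProduct]
  linarith

end Asymptotic

lemma limsup_le_liminf_add_of_eventually {α β : Type*} {la : Filter α} {lb : Filter β}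
    {f : β → ℝ} {g : α → ℝ} {c : ℝ} (hf : IsCoboundedUnder (· ≤ ·) lb f)
    (hg : IsCoboundedUnder (· ≥ ·) la g) (hfg : ∀ᶠ s in la, ∀ᶠ t in lb, f t ≤ g s + c) :
    limsup f lb ≤ liminf g la + c := by
  have hle : ∀ᶠ s in la, limsup f lb - c ≤ g s :=
    hfg.mono fun s hs => by linarith [limsup_le_of_le hf hs]
  linarith [le_liminf_of_le hg hle]

section Busemann

variable {X : Type*} [MetricSpace X] {δ : ℝ}

lemma IsDeltaHyperbolic.limsup_dist_sub_dist_le (hX : IsDeltaHyperbolic X δ) {h k : ℝ≥0 → X}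
    (hh : IsGeodesicRay h) (hk : IsGeodesicRay k)
    (hkh : hausdorffEDist (range k) (range h) ≠ ⊤) (x y : X) :
    limsup (fun t => dist x (h t) - dist y (h t)) atTop ≤
      liminf (fun t => dist x (k t) - dist y (k t)) atTop + 2 * δ :=
  limsup_le_liminf_add_of_eventually (isBoundedUnder_dist_sub_dist x y h).2.isCoboundedUnder_le
    (isBoundedUnder_dist_sub_dist x y k).1.isCoboundedUnder_ge
    (hX.eventually_dist_sub_dist_le hh hk hkh x y)

lemma IsDeltaHyperbolic.abs_busemannRay_add_sub_le (hX : IsDeltaHyperbolic X δ)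
    {h k : ℝ≥0 → X} (hh : IsGeodesicRay h) (hk : IsGeodesicRay k)
    (hhk : hausdorffEDist (range h) (range k) ≠ ⊤) (x : X) :
    |busemannRay x h + busemannRay (h 0) k - busemannRay x k| ≤ 2 * δ := by
  have hkh : hausdorffEDist (range k) (range h) ≠ ⊤ := by rwa [hausdorffEDist_comm]
  obtain ⟨hh₁, hh₂⟩ := hh.busemannRay_sub_mem x (h 0)
  obtain ⟨hk₁, hk₂⟩ := hk.busemannRay_sub_mem x (h 0)
  rw [hh.busemannRay_self, sub_zero] at hh₁ hh₂
  have hhk' := hX.limsup_dist_sub_dist_le hh hk hkh x (h 0)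
  have hkh' := hX.limsup_dist_sub_dist_le hk hh hhk x (h 0)
  rw [abs_le]
  constructor <;> linarith

lemma RayTo.busemannRay_self {a h : ℝ≥0 → X} {y : X} (hh : RayTo y a h) :
    busemannRay y h = 0 :=
  hh.2.1 ▸ hh.1.busemannRay_self

lemma IsDeltaHyperbolic.busemannRay_le_busemann (hX : IsDeltaHyperbolic X δ)
    {a h : ℝ≥0 → X} {y : X} (hh : RayTo y a h) (x : X) :
    busemannRay x h ≤ busemann a x y ∧ busemann a x y ≤ busemannRay x h + 2 * δ := by
  have hclose : ∀ h' ∈ {h' | RayTo y a h'}, busemannRay x h' ≤ busemannRay x h + 2 * δ := by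
    intro h' hh'
    have := hX.abs_busemannRay_add_sub_le hh.1 hh'.1 (hh.hausdorffEDist_ne_top hh') x
    rw [hh.2.1, hh'.busemannRay_self, add_zero, abs_le] at this
    linarith [this.1]
  refine ⟨le_csSup ⟨busemannRay x h + 2 * δ, ?_⟩ ⟨h, hh, rfl⟩, csSup_le ⟨_, h, hh, rfl⟩ ?_⟩ <;>
    rintro _ ⟨h', hh', rfl⟩ <;> exact hclose h' hh'

lemma IsDeltaHyperbolic.abs_busemann_add_sub_le (hX : IsDeltaHyperbolic X δ) {a : ℝ≥0 → X}
    (hexist : ∀ p : X, ∃ h : ℝ≥0 → X, RayTo p a h) (x y z : X) :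
    |busemann a x y + busemann a y z - busemann a x z| ≤ 6 * δ := by
  obtain ⟨h, hh⟩ := hexist y
  obtain ⟨k, hk⟩ := hexist z
  have hray := hX.abs_busemannRay_add_sub_le hh.1 hk.1 (hh.hausdorffEDist_ne_top hk) x
  rw [hh.2.1] at hray
  obtain ⟨hxy₁, hxy₂⟩ := hX.busemannRay_le_busemann hh x
  obtain ⟨hyz₁, hyz₂⟩ := hX.busemannRay_le_busemann hk y
  obtain ⟨hxz₁, hxz₂⟩ := hX.busemannRay_le_busemann hk x
  have hδ := hX.nonneg x
  rw [abs_le] at hray ⊢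
  constructor <;> linarith [hray.1, hray.2]

lemma IsDeltaHyperbolic.busemann_self_mem (hX : IsDeltaHyperbolic X δ) {a : ℝ≥0 → X}
    (hexist : ∀ p : X, ∃ h : ℝ≥0 → X, RayTo p a h) (x : X) :
    busemann a x x ∈ Icc 0 (2 * δ) := by
  obtain ⟨h, hh⟩ := hexist x
  simpa only [mem_Icc, hh.busemannRay_self, zero_add] using hX.busemannRay_le_busemann hh x

end Busemann

theorem busemann_antisymm_and_cocycle_general {X : Type*} [MetricSpace X] (δ : ℝ)
    (hhyp : IsDeltaHyperbolic X δ)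
    (a : ℝ≥0 → X)
    (hexist : ∀ p : X, ∃ h : ℝ≥0 → X, RayTo p a h) :
    (∀ x y : X, |busemann a x y + busemann a y x| ≤ 120 * δ) ∧
    (∀ x y z : X, |busemann a x y + busemann a y z - busemann a x z| ≤ 200 * δ) := by
  refine ⟨fun x y => ?_, fun x y z => ?_⟩
  · have hδ := hhyp.nonneg x
    have hcocycle := hhyp.abs_busemann_add_sub_le hexist x y x
    obtain ⟨hself₁, hself₂⟩ := hhyp.busemann_self_mem hexist x
    rw [abs_le] at hcocycle ⊢
    constructor <;> linarith [hcocycle.1, hcocycle.2]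
  · linarith [hhyp.nonneg x, hhyp.abs_busemann_add_sub_le hexist x y z]

/-- `|β_a(x,y) + β_a(y,x)| ≤ 120δ` and `|β_a(x,y) + β_a(y,z) − β_a(x,z)| ≤ 200δ`. -/
theorem busemann_antisymm_and_cocycle {X : Type*} [MetricSpace X] (δ : ℝ) (hδ : 0 ≤ δ)
    (hhyp : IsDeltaHyperbolic X δ) (hgeo : IsGeodesicSpace X)
    (a : ℝ≥0 → X) (ha : IsGeodesicRay a)
    (hexist : ∀ p : X, ∃ h : ℝ≥0 → X, RayTo p a h) :
    (∀ x y : X, |busemann a x y + busemann a y x| ≤ 120 * δ) ∧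
    (∀ x y z : X, |busemann a x y + busemann a y z - busemann a x z| ≤ 200 * δ) :=
  busemann_antisymm_and_cocycle_general δ hhyp a hexist
end

section
/- Assume Ivanov's twist inequality: for t = t₁^{n₁}⋯t_m^{n_m} a product of powers of Dehn twists about disjoint curves α₁,…,α_m, and all curves β, γ, one has Σᵢ (|nᵢ| − 2)·i(γ, αᵢ)·i(αᵢ, β) ≤ i(t(γ), β) + i(γ, β). Suppose t fixes a curve β_j with i(α_j, β_j) ≠ 0 for each j, in the sense that t^k(β_j) = β_j for all k ≥ 1. Then n_j = 0 for every j; i.e., t is the identity element of the free abelian group generated by the twists. -/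
/-!
Apply the twist inequality to `t^k` with `β = γ = β_j`. Since `t^k` fixes `β_j` and
`i(β_j, β_j) = 0`, it reads `k · Σᵢ |nᵢ|·wᵢ ≤ 2 · Σᵢ wᵢ` with `wᵢ = i(β_j, αᵢ)·i(αᵢ, β_j) ≥ 0`,
for every `k ≥ 1`. Hence `Σᵢ |nᵢ|·wᵢ = 0`, and as `w_j = i(α_j, β_j)² > 0`, `n_j = 0`.
-/

open Finset

lemma nonpos_of_forall_nat_mul_le {x B : ℝ} (h : ∀ k : ℕ, 1 ≤ k → k * x ≤ B) : x ≤ 0 := by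
  by_contra! hx
  obtain ⟨k, hk⟩ := exists_nat_gt (B / x)
  have hBk : B < (k + 1 : ℕ) * x := by
    rw [div_lt_iff₀ hx] at hk
    push_cast
    nlinarith
  linarith [h (k + 1) (Nat.le_add_left 1 k)]

lemma eq_zero_of_forall_sum_abs_mul_sub_two_mul_nonpos {ι : Type*} [Fintype ι]
    (c w : ι → ℝ) (hw : ∀ i, 0 ≤ w i)
    (h : ∀ k : ℕ, 1 ≤ k → ∑ i, (|c i * k| - 2) * w i ≤ 0) {j : ι} (hj : 0 < w j) :
    c j = 0 := by
  have hterm : ∀ i ∈ univ, 0 ≤ |c i| * w i := fun i _ => mul_nonneg (abs_nonneg _) (hw i)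
  have hbound : ∀ k : ℕ, 1 ≤ k → k * ∑ i, |c i| * w i ≤ 2 * ∑ i, w i := by
    intro k hk
    have hexpand : ∑ i, (|c i * k| - 2) * w i = k * ∑ i, |c i| * w i - 2 * ∑ i, w i := by
      simp only [abs_mul, Nat.abs_cast, mul_sum, ← sum_sub_distrib]
      exact sum_congr rfl fun i _ => by ring
    linarith [h k hk]
  have hzero : ∑ i, |c i| * w i = 0 :=
    le_antisymm (nonpos_of_forall_nat_mul_le hbound) (sum_nonneg hterm)
  have hj0 : |c j| * w j = 0 := (sum_eq_zero_iff_of_nonneg hterm).mp hzero j (mem_univ j)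
  simpa [hj.ne'] using hj0

/-- `t k` stands for the `k`-th power of the multitwist `t₁^{n₁}⋯t_m^{n_m}`, whose exponents are
`nᵢ·k`; `htwist` is Ivanov's twist inequality for it. -/
theorem multitwist_trivial_of_fixes_transversals_general
    {C : Type*} (I : C → C → ℝ)
    (hsymm : ∀ a b : C, I a b = I b a)
    (hnonneg : ∀ a b : C, 0 ≤ I a b)
    (hself : ∀ a : C, I a a = 0)
    {m : ℕ} (α : Fin m → C)
    (n : Fin m → ℤ) (t : ℕ → C → C)
    (htwist : ∀ (k : ℕ) (β γ : C),
      (∑ i : Fin m, (|((n i : ℝ)) * (k : ℝ)| - 2) * I γ (α i) * I (α i) β)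
        ≤ I (t k γ) β + I γ β)
    (β : Fin m → C) (hint : ∀ j : Fin m, I (α j) (β j) ≠ 0)
    (hfix : ∀ (k : ℕ), 1 ≤ k → ∀ j : Fin m, t k (β j) = β j) :
    ∀ j : Fin m, n j = 0 := by
  intro j
  have hw : ∀ i, 0 ≤ I (β j) (α i) * I (α i) (β j) :=
    fun i => mul_nonneg (hnonneg _ _) (hnonneg _ _)
  have hwj : 0 < I (β j) (α j) * I (α j) (β j) := by
    rw [hsymm (β j)]
    exact mul_self_pos.mpr (hint j)
  have hsum : ∀ k : ℕ, 1 ≤ k →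
      ∑ i, (|(n i : ℝ) * k| - 2) * (I (β j) (α i) * I (α i) (β j)) ≤ 0 := by
    intro k hk
    simpa only [hfix k hk j, hself, add_zero, mul_assoc] using htwist k (β j) (β j)
  exact_mod_cast eq_zero_of_forall_sum_abs_mul_sub_two_mul_nonpos _ _ hw hsum hwj

/-- Abstract form of Corollary: let `I` be the geometric intersection number,
`α₁, …, α_m` pairwise disjoint curves, `t k` the `k`-th power of the multitwist
`t = t₁^{n₁}⋯t_m^{n_m}` (so `t^k` has exponents `nᵢ·k`), satisfying Ivanov's twist
inequality `Σᵢ (|nᵢ·k| − 2)·I(γ,αᵢ)·I(αᵢ,β) ≤ I(t^k(γ), β) + I(γ,β)`. If for each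
`j` there is a curve `β_j` with `I(α_j, β_j) ≠ 0` fixed by all powers `t^k`, then
every exponent `n_j` is zero. -/
theorem multitwist_trivial_of_fixes_transversals
    {C : Type*} (I : C → C → ℝ)
    (hsymm : ∀ a b : C, I a b = I b a)
    (hnonneg : ∀ a b : C, 0 ≤ I a b)
    (hself : ∀ a : C, I a a = 0)
    {m : ℕ} (α : Fin m → C)
    (hdisj : ∀ i j : Fin m, i ≠ j → I (α i) (α j) = 0)
    (n : Fin m → ℤ) (t : ℕ → C → C)
    (htwist : ∀ (k : ℕ) (β γ : C),
      (∑ i : Fin m, (|((n i : ℝ)) * (k : ℝ)| - 2) * I γ (α i) * I (α i) β)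
        ≤ I (t k γ) β + I γ β)
    (β : Fin m → C) (hint : ∀ j : Fin m, I (α j) (β j) ≠ 0)
    (hfix : ∀ (k : ℕ), 1 ≤ k → ∀ j : Fin m, t k (β j) = β j) :
    ∀ j : Fin m, n j = 0 :=
  multitwist_trivial_of_fixes_transversals_general I hsymm hnonneg hself α n t htwist β hint hfix
end
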